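/- For every t > 0, the normed space (𝒲_t, ‖·‖_{𝒲_t}) is complete; equivalently, every sequence (k_m) in 𝒲_t with Σ_m ‖k_m‖_{𝒲_t} < ∞ has the property that Σ_m k_m converges pointwise to an element k of 𝒲_t with ‖k‖_{𝒲_t} ≤ Σ_m ‖k_m‖_{𝒲_t}. -/

import Mathlib

open MeasureTheory Complex Filter
open scoped ENNReal NNReal Topology

noncomputable section

/-- ℂⁿ, modeled as maps from `Fin n` to `ℂ`. -/
abbrev Cn (n : ℕ) := Fin n → ℂ

/-- The Euclidean norm `|z|` on ℂⁿ. -/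
def eNorm {n : ℕ} (z : Cn n) : ℝ := Real.sqrt (∑ i, ‖z i‖ ^ 2)

/-- The sesquilinear pairing `w·z̄` on ℂⁿ. -/
def herm {n : ℕ} (w z : Cn n) : ℂ := ∑ i, w i * (starRingEnd ℂ) (z i)

/-- The Gaussian measure `dμ_t(z) = (πt)^{-n} e^{-|z|²/t} dz` on ℂⁿ. -/
def gaussianMeasure (n : ℕ) (t : ℝ) : Measure (Cn n) :=
  volume.withDensity fun z => ENNReal.ofReal (((Real.pi * t) ^ n)⁻¹ * Real.exp (-eNorm z ^ 2 / t))

/-- The `F_t^p`-norm (equivalently, the `L_t^p`-norm): for `p < ∞` it is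
`((p/(2πt))^n ∫ |f(z)|^p e^{-p|z|²/(2t)} dz)^{1/p}`, and for `p = ∞` it is
`sup_z |f(z)| e^{-|z|²/(2t)}` (with values in `[0,∞]`). -/
def fockNormE (n : ℕ) (t : ℝ) (p : ℝ≥0∞) (f : Cn n → ℂ) : ℝ≥0∞ :=
  if p = ∞ then ⨆ z : Cn n, ENNReal.ofReal (‖f z‖ * Real.exp (-eNorm z ^ 2 / (2 * t)))
  else (ENNReal.ofReal ((p.toReal / (2 * Real.pi * t)) ^ n) *
      ∫⁻ z, ENNReal.ofReal ((‖f z‖ * Real.exp (-eNorm z ^ 2 / (2 * t))) ^ p.toReal)) ^ p.toReal⁻¹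

/-- Membership in the Fock space `F_t^p`: entire with finite Fock `p`-norm. -/
def MemFock (n : ℕ) (t : ℝ) (p : ℝ≥0∞) (f : Cn n → ℂ) : Prop :=
  Differentiable ℂ f ∧ fockNormE n t p f < ∞

/-- Membership in the Wiener class `𝒲_t`: measurable kernels that are holomorphic in the
second variable, anti-holomorphic in the first variable (i.e. the conjugate is holomorphic),
and dominated by `e^{(|z|²+|w|²)/(2t)} H(w-z)` for some nonnegative `H ∈ L¹(ℂⁿ)`. -/
def IsWienerKernel (n : ℕ) (t : ℝ) (k : Cn n → Cn n → ℂ) : Prop :=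
  Measurable (fun q : Cn n × Cn n => k q.1 q.2) ∧
  (∀ w : Cn n, Differentiable ℂ fun z => k w z) ∧
  (∀ z : Cn n, Differentiable ℂ fun w => (starRingEnd ℂ) (k w z)) ∧
  ∃ H : Cn n → ℝ, Integrable H ∧ (∀ x, 0 ≤ H x) ∧
    ∀ w z : Cn n, ‖k w z‖ ≤ Real.exp ((eNorm z ^ 2 + eNorm w ^ 2) / (2 * t)) * H (w - z)

/-- The Wiener norm `‖k‖_{𝒲_t} = (πt)^{-n} inf { ‖H‖_{L¹} : H a dominating function for k }`. -/
def wienerNorm (n : ℕ) (t : ℝ) (k : Cn n → Cn n → ℂ) : ℝ :=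
  ((Real.pi * t) ^ n)⁻¹ *
    sInf { c : ℝ | ∃ H : Cn n → ℝ, Integrable H ∧ (∀ x, 0 ≤ H x) ∧
      (∀ w z : Cn n, ‖k w z‖ ≤ Real.exp ((eNorm z ^ 2 + eNorm w ^ 2) / (2 * t)) * H (w - z)) ∧
      c = ∫ x, H x }

/-!
Multiplying `k(w, ·)` by the holomorphic factor `exp(-⟨ζ, w⟩/t)` turns the weight
`exp((|ζ|² + |w|²)/(2t))` into `exp(|ζ - w|²/(2t))`, and the sub-mean value property on the unit
polydisc around `z` then bounds a kernel pointwise by the `L¹`-norm of any majorant `H`: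
`π^n |k(w, z)| ≤ exp((|z|² + |w|²)/(2t)) exp((2√n |w - z| + n)/(2t)) ‖H‖₁`.
Choosing majorants `H_m` of the `k_m` with `Σ ‖H_m‖₁ ≤ (πt)^n Σ ‖k_m‖ + ε`, the series `Σ k_m`
converges locally uniformly, so its sum is again (anti-)holomorphic, and it is dominated by
`Σ H_m`, which is finite almost everywhere; on the remaining null set the pointwise bound serves
as the majorant.
-/

open Set Metric
open scoped Real

section EuclideanNorm

variable {n : ℕ}

lemma eNorm_eq_norm_toLp (z : Cn n) : eNorm z = ‖WithLp.toLp 2 z‖ := by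
  rw [EuclideanSpace.norm_eq]; rfl

lemma eNorm_nonneg (z : Cn n) : 0 ≤ eNorm z := Real.sqrt_nonneg _

lemma continuous_eNorm : Continuous (eNorm : Cn n → ℝ) := by
  unfold eNorm; fun_prop

lemma eNorm_add_le (a b : Cn n) : eNorm (a + b) ≤ eNorm a + eNorm b := by
  simp only [eNorm_eq_norm_toLp, WithLp.toLp_add, norm_add_le]

lemma eNorm_sub_comm (a b : Cn n) : eNorm (a - b) = eNorm (b - a) := by
  simp only [eNorm_eq_norm_toLp, WithLp.toLp_sub, norm_sub_rev]

lemma eNorm_le_sqrt_mul_norm (z : Cn n) : eNorm z ≤ √n * ‖z‖ := by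
  calc eNorm z ≤ √(∑ _i : Fin n, ‖z‖ ^ 2) :=
        Real.sqrt_le_sqrt <| Finset.sum_le_sum fun i _ =>
          pow_le_pow_left₀ (norm_nonneg _) (norm_le_pi_norm z i) 2
    _ = √n * ‖z‖ := by
        simp [Real.sqrt_mul (Nat.cast_nonneg n), Real.sqrt_sq (norm_nonneg z)]

lemma eNorm_sub_sq (a b : Cn n) :
    eNorm (a - b) ^ 2 = eNorm a ^ 2 + eNorm b ^ 2 - 2 * (herm a b).re := by
  have hsq (z : Cn n) : eNorm z ^ 2 = ∑ i, Complex.normSq (z i) := by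
    rw [eNorm, Real.sq_sqrt (Finset.sum_nonneg fun i _ => sq_nonneg ‖z i‖)]
    simp only [Complex.sq_norm]
  simp only [hsq, herm, Complex.re_sum, Pi.sub_apply, Complex.normSq_sub, Finset.sum_sub_distrib,
    Finset.sum_add_distrib, Finset.mul_sum]

lemma eNorm_sub_le_of_mem_closedBall {z ζ : Cn n} (hζ : ζ ∈ closedBall z 1) (w : Cn n) :
    eNorm (ζ - w) ≤ eNorm (z - w) + √n := by
  have hζz : eNorm (ζ - z) ≤ √n := by
    have := eNorm_le_sqrt_mul_norm (ζ - z)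
    rw [mem_closedBall, dist_eq_norm] at hζ
    nlinarith [Real.sqrt_nonneg n]
  calc eNorm (ζ - w) = eNorm ((ζ - z) + (z - w)) := by rw [sub_add_sub_cancel]
    _ ≤ eNorm (z - w) + √n := by linarith [eNorm_add_le (ζ - z) (z - w)]

end EuclideanNorm

section SubMeanValue

variable {E : Type*} [NormedAddCommGroup E] [NormedSpace ℂ E] [CompleteSpace E]

lemma ofReal_two_pi_mul_enorm_le_lintegral_circleMap {f : ℂ → E} {c : ℂ} {r : ℝ}
    (hf : DiffContOnCl ℂ f (ball c |r|)) :
    ENNReal.ofReal (2 * π) * ‖f c‖ₑ ≤ ∫⁻ θ in Ioo (-π) π, ‖f (circleMap c r θ)‖ₑ := by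
  have hmean : ∫ θ in Ioo (-π) π, f (circleMap c r θ) = (2 * π) • f c := by
    have hper : Function.Periodic (fun θ => f (circleMap c r θ)) (2 * π) := fun θ => by
      simp only [periodic_circleMap c r θ]
    rw [← hf.circleAverage, Real.circleAverage_def, smul_inv_smul₀ (by positivity),
      ← integral_Ioc_eq_integral_Ioo, ← intervalIntegral.integral_of_le (by linarith [Real.pi_pos]),
      ← zero_add (2 * π), ← hper.intervalIntegral_add_eq (-π) 0]
    ring_nf
  calc ENNReal.ofReal (2 * π) * ‖f c‖ₑ = ‖(2 * π) • f c‖ₑ := by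
        rw [enorm_smul, Real.enorm_of_nonneg (by positivity)]
    _ ≤ _ := hmean ▸ enorm_integral_le_lintegral_enorm _

lemma lintegral_ofReal_Ioo_zero_one :
    ∫⁻ r in Ioo (0 : ℝ) 1, ENNReal.ofReal r = ENNReal.ofReal (1 / 2) := by
  rw [← ofReal_integral_eq_lintegral_ofReal, ← integral_Ioc_eq_integral_Ioo,
    ← intervalIntegral.integral_of_le zero_le_one, integral_id]
  · norm_num
  · exact continuous_id.integrableOn_Icc.mono_set Ioo_subset_Icc_self
  · exact ae_restrict_of_forall_mem measurableSet_Ioo fun r hr => hr.1.le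

lemma ofReal_pi_mul_enorm_le_lintegral_closedBall {f : ℂ → E} (hf : Differentiable ℂ f) (c : ℂ) :
    ENNReal.ofReal π * ‖f c‖ₑ ≤ ∫⁻ u in closedBall c 1, ‖f u‖ₑ := by
  set g : ℂ → ℝ≥0∞ := (closedBall (0 : ℂ) 1).indicator fun u => ‖f (c + u)‖ₑ
  have hg : ∫⁻ u in closedBall c 1, ‖f u‖ₑ = ∫⁻ u, g u := by
    rw [← lintegral_indicator measurableSet_closedBall, ← lintegral_add_left_eq_self _ c]
    congr with u
    simp [g, indicator, mem_closedBall, dist_eq_norm]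
  set D : Set (ℝ × ℝ) := Ioo 0 1 ×ˢ Ioo (-π) π
  have hD : D ⊆ polarCoord.target := by
    rw [polarCoord_target]
    exact prod_mono Ioo_subset_Ioi_self subset_rfl
  have hgD : EqOn (fun p => ENNReal.ofReal p.1 * ‖f (circleMap c p.1 p.2)‖ₑ)
      (fun p => ENNReal.ofReal p.1 • g (Complex.polarCoord.symm p)) D := by
    rintro ⟨r, θ⟩ ⟨hr, -⟩
    have hsymm : Complex.polarCoord.symm (r, θ) = circleMap 0 r θ := by
      simp [circleMap_zero, Complex.exp_mul_I]
    have hmem : circleMap 0 r θ ∈ closedBall (0 : ℂ) 1 := by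
      simp [abs_of_pos hr.1, hr.2.le]
    simp only [g, hsymm, smul_eq_mul, indicator_of_mem hmem]
    simp only [circleMap, zero_add]
  have hmeas : Measurable fun p : ℝ × ℝ => ENNReal.ofReal p.1 * ‖f (circleMap c p.1 p.2)‖ₑ :=
    measurable_fst.ennreal_ofReal.mul
      (hf.continuous.comp Real.circleMap.continuous).enorm.measurable
  calc ENNReal.ofReal π * ‖f c‖ₑ
      = ∫⁻ r in Ioo 0 1, ENNReal.ofReal r * (ENNReal.ofReal (2 * π) * ‖f c‖ₑ) := by
        rw [lintegral_mul_const _ (by fun_prop), lintegral_ofReal_Ioo_zero_one, ← mul_assoc,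
          ← ENNReal.ofReal_mul (by norm_num)]
        congr 2
        ring
    _ ≤ ∫⁻ r in Ioo 0 1, ∫⁻ θ in Ioo (-π) π, ENNReal.ofReal r * ‖f (circleMap c r θ)‖ₑ := by
        refine lintegral_mono fun r => ?_
        rw [lintegral_const_mul' _ _ ENNReal.ofReal_ne_top]
        exact mul_le_mul_right (ofReal_two_pi_mul_enorm_le_lintegral_circleMap
          hf.diffContOnCl) _
    _ = ∫⁻ p in D, ENNReal.ofReal p.1 * ‖f (circleMap c p.1 p.2)‖ₑ := by
        rw [Measure.volume_eq_prod, ← Measure.prod_restrict, lintegral_prod _ hmeas.aemeasurable]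
    _ = ∫⁻ p in D, ENNReal.ofReal p.1 • g (Complex.polarCoord.symm p) :=
        setLIntegral_congr_fun (measurableSet_Ioo.prod measurableSet_Ioo) hgD
    _ ≤ ∫⁻ p in polarCoord.target, ENNReal.ofReal p.1 • g (Complex.polarCoord.symm p) :=
        lintegral_mono_set hD
    _ = ∫⁻ u in closedBall c 1, ‖f u‖ₑ := by rw [Complex.lintegral_comp_polarCoord_symm, hg]

-- `Fin n → ℂ` carries the sup norm, so `closedBall z 1` is the unit polydisc around `z`.
lemma ofReal_pi_pow_mul_enorm_le_lintegral_closedBall {n : ℕ} {f : (Fin n → ℂ) → E}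
    (hf : Differentiable ℂ f) (z : Fin n → ℂ) :
    ENNReal.ofReal π ^ n * ‖f z‖ₑ ≤ ∫⁻ ζ in closedBall z 1, ‖f ζ‖ₑ := by
  induction n with
  | zero =>
    have hz : ∀ ζ : Fin 0 → ℂ, ζ = z := fun ζ => Subsingleton.elim ζ z
    have hball : closedBall z 1 = univ := eq_univ_of_forall fun ζ => by simp [hz ζ]
    simp [hball, hz, volume_pi]
  | succ n ih =>
    let e := MeasurableEquiv.piFinSuccAbove (fun _ : Fin (n + 1) => ℂ) 0
    have he (a : ℂ) (y : Fin n → ℂ) : e.symm (a, y) = Fin.cons a y := by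
      simp [e, MeasurableEquiv.piFinSuccAbove_symm_apply, Fin.insertNthEquiv, Fin.insertNth_zero']
    have hpre : e ⁻¹' (closedBall (z 0) 1 ×ˢ closedBall (Fin.tail z) 1) = closedBall z 1 := by
      ext ζ
      simp [e, closedBall_pi _ zero_le_one, Fin.forall_fin_succ, Fin.tail]
    have hmeas : Measurable fun p : ℂ × (Fin n → ℂ) => ‖f (Fin.cons p.1 p.2)‖ₑ :=
      (hf.continuous.comp (by fun_prop)).enorm.measurable
    calc ENNReal.ofReal π ^ (n + 1) * ‖f z‖ₑ
        = ENNReal.ofReal π ^ n * (ENNReal.ofReal π * ‖f (Fin.cons (z 0) (Fin.tail z))‖ₑ) := by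
          rw [Fin.cons_self_tail, pow_succ, mul_assoc]
      _ ≤ ENNReal.ofReal π ^ n * ∫⁻ a in closedBall (z 0) 1, ‖f (Fin.cons a (Fin.tail z))‖ₑ :=
          mul_le_mul_right (ofReal_pi_mul_enorm_le_lintegral_closedBall
            (hf.comp (by fun_prop)) _) _
      _ = ∫⁻ a in closedBall (z 0) 1, ENNReal.ofReal π ^ n * ‖f (Fin.cons a (Fin.tail z))‖ₑ :=
          (lintegral_const_mul' _ _ (by simp)).symm
      _ ≤ ∫⁻ a in closedBall (z 0) 1, ∫⁻ y in closedBall (Fin.tail z) 1, ‖f (Fin.cons a y)‖ₑ :=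
          lintegral_mono fun a => ih (hf.comp (by fun_prop)) _
      _ = ∫⁻ p in closedBall (z 0) 1 ×ˢ closedBall (Fin.tail z) 1, ‖f (Fin.cons p.1 p.2)‖ₑ := by
          rw [Measure.volume_eq_prod, ← Measure.prod_restrict,
            lintegral_prod _ hmeas.aemeasurable]
      _ = ∫⁻ ζ in closedBall z 1, ‖f ζ‖ₑ := by
          rw [← hpre, ← (volume_preserving_piFinSuccAbove (fun _ => ℂ) 0
            |>.setLIntegral_comp_preimage_emb e.measurableEmbedding)]
          simp only [← he, Prod.mk.eta]
          simp only [e, MeasurableEquiv.symm_apply_apply]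

lemma pi_pow_mul_norm_le_integral {n : ℕ} {f : (Fin n → ℂ) → E} (hf : Differentiable ℂ f)
    {Φ : (Fin n → ℂ) → ℝ} (hΦ : Integrable Φ) (hΦ0 : 0 ≤ Φ) {z : Fin n → ℂ}
    (hfΦ : ∀ ζ ∈ closedBall z 1, ‖f ζ‖ ≤ Φ ζ) :
    π ^ n * ‖f z‖ ≤ ∫ ζ, Φ ζ := by
  rw [← ENNReal.ofReal_le_ofReal_iff (integral_nonneg hΦ0),
    ofReal_integral_eq_lintegral_ofReal hΦ (ae_of_all _ hΦ0), ENNReal.ofReal_mul (by positivity),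
    ENNReal.ofReal_pow Real.pi_pos.le, ofReal_norm]
  calc ENNReal.ofReal π ^ n * ‖f z‖ₑ ≤ ∫⁻ ζ in closedBall z 1, ‖f ζ‖ₑ :=
        ofReal_pi_pow_mul_enorm_le_lintegral_closedBall hf z
    _ ≤ ∫⁻ ζ in closedBall z 1, ENNReal.ofReal (Φ ζ) :=
        setLIntegral_mono' measurableSet_closedBall fun ζ hζ => by
          rw [← ofReal_norm]
          exact ENNReal.ofReal_le_ofReal (hfΦ ζ hζ)
    _ ≤ ∫⁻ ζ, ENNReal.ofReal (Φ ζ) := setLIntegral_le_lintegral _ _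

end SubMeanValue

section Series

lemma differentiable_tsum_of_norm_le {ι E F : Type*} [NormedAddCommGroup E] [NormedSpace ℂ E]
    [NormedAddCommGroup F] [NormedSpace ℂ F] [CompleteSpace F] {f : ι → E → F}
    (hf : ∀ m, Differentiable ℂ (f m)) {C : E → ℝ} (hC : Continuous C) {a : ι → ℝ}
    (ha : Summable a) (ha0 : ∀ m, 0 ≤ a m) (hfa : ∀ m x, ‖f m x‖ ≤ C x * a m) :
    Differentiable ℂ fun x => ∑' m, f m x := by
  intro x₀
  obtain ⟨δ, hδ, hCδ⟩ : ∃ δ > 0, ∀ x ∈ ball x₀ δ, C x < C x₀ + 1 :=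
    eventually_nhds_iff_ball.mp (hC.continuousAt.eventually (gt_mem_nhds (lt_add_one _)))
  have hfx (m : ι) {x : E} (hx : x ∈ ball x₀ δ) : ‖f m x‖ ≤ (C x₀ + 1) * a m :=
    (hfa m x).trans (mul_le_mul_of_nonneg_right (hCδ x hx).le (ha0 m))
  have hderiv (m : ι) (x : E) (hx : x ∈ ball x₀ (δ / 2)) :
      ‖fderiv ℂ (f m) x‖ ≤ 4 * (C x₀ + 1) / δ * a m := by
    have hmaps : MapsTo (f m) (ball x (δ / 2)) (closedBall (f m x) (2 * ((C x₀ + 1) * a m))) := by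
      intro y hy
      have hx' : x ∈ ball x₀ δ := ball_subset_ball (by linarith) hx
      have hy' : y ∈ ball x₀ δ := by
        rw [mem_ball] at hx hy ⊢
        linarith [dist_triangle y x x₀]
      rw [mem_closedBall, dist_eq_norm]
      linarith [norm_sub_le (f m y) (f m x), hfx m hx', hfx m hy']
    calc ‖fderiv ℂ (f m) x‖ ≤ 2 * ((C x₀ + 1) * a m) / (δ / 2) :=
          Complex.norm_fderiv_le_div_of_mapsTo_ball (hf m).differentiableOn hmaps (half_pos hδ)
      _ = 4 * (C x₀ + 1) / δ * a m := by field_simp; ring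
  have hx₀ : x₀ ∈ ball x₀ (δ / 2) := mem_ball_self (half_pos hδ)
  exact (hasFDerivAt_tsum_of_isPreconnected (ha.mul_left _) isOpen_ball
    (convex_ball x₀ _).isPreconnected (fun m x _ => (hf m x).hasFDerivAt) hderiv hx₀
    ((ha.mul_left (C x₀)).of_norm_bounded (hfa · x₀)) hx₀).differentiableAt

lemma integrable_tsum_of_nonneg {ι α : Type*} [Countable ι] [MeasurableSpace α] {μ : Measure α}
    {H : ι → α → ℝ} (hH : ∀ m, Integrable (H m) μ) (hH0 : ∀ m, 0 ≤ H m)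
    (hs : Summable fun m => ∫ x, H m x ∂μ) :
    Integrable (fun x => ∑' m, H m x) μ ∧ ∀ᵐ x ∂μ, Summable fun m => H m x := by
  set F : α → ℝ≥0∞ := fun x => ∑' m, ENNReal.ofReal (H m x)
  have hHm (m : ι) : AEMeasurable (fun x => ENNReal.ofReal (H m x)) μ :=
    (hH m).aemeasurable.ennreal_ofReal
  have hF : AEMeasurable F μ := AEMeasurable.tsum hHm
  have hFint : ∫⁻ x, F x ∂μ ≠ ∞ := by
    simp_rw [F, lintegral_tsum hHm,
      ← ofReal_integral_eq_lintegral_ofReal (hH _) (ae_of_all _ (hH0 _)),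
      ← ENNReal.ofReal_tsum_of_nonneg (fun m => integral_nonneg (hH0 m)) hs]
    exact ENNReal.ofReal_ne_top
  have htoReal (x : α) (m : ι) : (ENNReal.ofReal (H m x)).toReal = H m x :=
    ENNReal.toReal_ofReal (hH0 m x)
  have hFH : (fun x => ∑' m, H m x) = fun x => (F x).toReal := funext fun x => by
    simp only [F, ENNReal.tsum_toReal_eq fun _ => ENNReal.ofReal_ne_top, htoReal]
  refine ⟨hFH ▸ integrable_toReal_of_lintegral_ne_top hF hFint, ?_⟩
  filter_upwards [ae_lt_top' hF hFint] with x hx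
  simpa only [htoReal] using ENNReal.summable_toReal hx.ne

end Series

section WienerClass

variable {n : ℕ} {t : ℝ}

def IsWienerMajorant (t : ℝ) (k : Cn n → Cn n → ℂ) (H : Cn n → ℝ) : Prop :=
  ∀ w z : Cn n, ‖k w z‖ ≤ Real.exp ((eNorm z ^ 2 + eNorm w ^ 2) / (2 * t)) * H (w - z)

def wienerBoundFactor (n : ℕ) (t : ℝ) (x : Cn n) : ℝ :=
  (π ^ n)⁻¹ * Real.exp ((2 * √n * eNorm x + n) / (2 * t))

lemma continuous_wienerBoundFactor : Continuous (wienerBoundFactor n t) := by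
  have := continuous_eNorm (n := n)
  unfold wienerBoundFactor
  fun_prop

lemma IsWienerMajorant.norm_le (ht : 0 < t) {k : Cn n → Cn n → ℂ}
    (hk : ∀ w, Differentiable ℂ (k w)) {H : Cn n → ℝ} (hH : Integrable H) (hH0 : 0 ≤ H)
    (hkH : IsWienerMajorant t k H) (w z : Cn n) :
    ‖k w z‖ ≤ Real.exp ((eNorm z ^ 2 + eNorm w ^ 2) / (2 * t)) *
      (wienerBoundFactor n t (w - z) * ∫ x, H x) := by
  set g : Cn n → ℂ := fun ζ => k w ζ * Complex.exp (-herm ζ w / t)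
  have hg : Differentiable ℂ g := by
    have : Differentiable ℂ fun ζ : Cn n => -herm ζ w / t := by unfold herm; fun_prop
    exact (hk w).mul this.cexp
  have hnorm_g (ζ : Cn n) : ‖g ζ‖ = ‖k w ζ‖ * Real.exp (-(herm ζ w).re / t) := by
    simp [g, Complex.norm_exp, Complex.div_ofReal_re]
  set B := Real.exp ((eNorm (z - w) + √n) ^ 2 / (2 * t)) with hB
  have hgB : ∀ ζ ∈ closedBall z 1, ‖g ζ‖ ≤ B * H (w - ζ) := by
    intro ζ hζ
    calc ‖g ζ‖ ≤ Real.exp ((eNorm ζ ^ 2 + eNorm w ^ 2) / (2 * t)) * H (w - ζ) *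
          Real.exp (-(herm ζ w).re / t) := by
          rw [hnorm_g]
          gcongr
          exact hkH w ζ
      _ = Real.exp (eNorm (ζ - w) ^ 2 / (2 * t)) * H (w - ζ) := by
          rw [eNorm_sub_sq, mul_right_comm, ← Real.exp_add]
          congr 2
          field_simp
          ring
      _ ≤ B * H (w - ζ) := by
          refine mul_le_mul_of_nonneg_right (Real.exp_le_exp.mpr ?_) (hH0 _)
          exact div_le_div_of_nonneg_right (pow_le_pow_left₀ (eNorm_nonneg _)
            (eNorm_sub_le_of_mem_closedBall hζ w) 2) (by positivity)
  have hmean := pi_pow_mul_norm_le_integral hg ((hH.comp_sub_left w).const_mul B)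
    (fun ζ => mul_nonneg (Real.exp_pos _).le (hH0 _)) hgB
  rw [integral_const_mul, integral_sub_left_eq_self] at hmean
  have hkg : ‖k w z‖ = ‖g z‖ * Real.exp ((herm z w).re / t) := by
    rw [hnorm_g, mul_assoc, ← Real.exp_add, neg_div, neg_add_cancel, Real.exp_zero, mul_one]
  have hexp : B * Real.exp ((herm z w).re / t) = Real.exp ((eNorm z ^ 2 + eNorm w ^ 2) / (2 * t)) *
      Real.exp ((2 * √n * eNorm (w - z) + n) / (2 * t)) := by
    have hsq : eNorm (w - z) ^ 2 = eNorm z ^ 2 + eNorm w ^ 2 - 2 * (herm z w).re := by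
      rw [eNorm_sub_comm]; exact eNorm_sub_sq z w
    rw [hB, eNorm_sub_comm z w, ← Real.exp_add, ← Real.exp_add]
    congr 1
    field_simp
    rw [add_sq, Real.sq_sqrt (Nat.cast_nonneg n), hsq]
    ring
  rw [hkg, wienerBoundFactor]
  calc ‖g z‖ * Real.exp ((herm z w).re / t)
      = (π ^ n)⁻¹ * (π ^ n * ‖g z‖) * Real.exp ((herm z w).re / t) := by field_simp
    _ ≤ (π ^ n)⁻¹ * (B * ∫ x, H x) * Real.exp ((herm z w).re / t) := by gcongr
    _ = (π ^ n)⁻¹ * (B * Real.exp ((herm z w).re / t)) * ∫ x, H x := by ring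
    _ = _ := by rw [hexp]; ring

end WienerClass

section WienerFamily

variable {n : ℕ} {t : ℝ}

structure IsSummableMajorantFamily (t : ℝ) (k : ℕ → Cn n → Cn n → ℂ) (H : ℕ → Cn n → ℝ) :
    Prop where
  integrable : ∀ m, Integrable (H m)
  nonneg : ∀ m, 0 ≤ H m
  majorant : ∀ m, IsWienerMajorant t (k m) (H m)
  summable_integral : Summable fun m => ∫ x, H m x

namespace IsSummableMajorantFamily

variable {k : ℕ → Cn n → Cn n → ℂ} {H : ℕ → Cn n → ℝ}

lemma norm_le (hkH : IsSummableMajorantFamily t k H) (ht : 0 < t)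
    (hk : ∀ m w, Differentiable ℂ (k m w)) (m : ℕ) (w z : Cn n) :
    ‖k m w z‖ ≤ Real.exp ((eNorm z ^ 2 + eNorm w ^ 2) / (2 * t)) *
      wienerBoundFactor n t (w - z) * ∫ x, H m x :=
  ((hkH.majorant m).norm_le ht (hk m) (hkH.integrable m) (hkH.nonneg m) w z).trans_eq
    (mul_assoc _ _ _).symm

lemma summable (hkH : IsSummableMajorantFamily t k H) (ht : 0 < t)
    (hk : ∀ m w, Differentiable ℂ (k m w)) (w z : Cn n) : Summable fun m => k m w z :=
  (hkH.summable_integral.mul_left _).of_norm_bounded (hkH.norm_le ht hk · w z)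

lemma differentiable_tsum (hkH : IsSummableMajorantFamily t k H) (ht : 0 < t)
    (hk : ∀ m w, Differentiable ℂ (k m w)) (w : Cn n) :
    Differentiable ℂ fun z => ∑' m, k m w z := by
  refine differentiable_tsum_of_norm_le (hk · w) ?_ hkH.summable_integral
    (fun m => integral_nonneg (hkH.nonneg m)) (hkH.norm_le ht hk · w)
  have := continuous_eNorm (n := n)
  have := continuous_wienerBoundFactor (n := n) (t := t)
  fun_prop

lemma differentiable_conj_tsum (hkH : IsSummableMajorantFamily t k H) (ht : 0 < t)
    (hk : ∀ m w, Differentiable ℂ (k m w))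
    (hk' : ∀ m z, Differentiable ℂ fun w => starRingEnd ℂ (k m w z)) (z : Cn n) :
    Differentiable ℂ fun w => starRingEnd ℂ (∑' m, k m w z) := by
  simp_rw [Complex.conj_tsum]
  refine differentiable_tsum_of_norm_le (hk' · z)
    (C := fun w => Real.exp ((eNorm z ^ 2 + eNorm w ^ 2) / (2 * t)) * wienerBoundFactor n t (w - z))
    ?_ hkH.summable_integral
    (fun m => integral_nonneg (hkH.nonneg m)) fun m w => ?_
  · have := continuous_eNorm (n := n)
    have := continuous_wienerBoundFactor (n := n) (t := t)
    fun_prop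
  · rw [Complex.norm_conj]
    exact hkH.norm_le ht hk m w z

lemma exists_isWienerMajorant_tsum (hkH : IsSummableMajorantFamily t k H) (ht : 0 < t)
    (hk : ∀ m w, Differentiable ℂ (k m w)) :
    ∃ G : Cn n → ℝ, Integrable G ∧ (∀ x, 0 ≤ G x) ∧
      IsWienerMajorant t (fun w z => ∑' m, k m w z) G ∧ ∫ x, G x = ∑' m, ∫ x, H m x := by
  classical
  obtain ⟨hint, hae⟩ := integrable_tsum_of_nonneg hkH.integrable hkH.nonneg hkH.summable_integral
  -- On the null set where `∑ H m` diverges, the pointwise bound `IsWienerMajorant.norm_le` is used.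
  let G : Cn n → ℝ := fun x => if Summable fun m => H m x then ∑' m, H m x
    else wienerBoundFactor n t x * ∑' m, ∫ y, H m y
  have hG : G =ᵐ[volume] fun x => ∑' m, H m x := by
    filter_upwards [hae] with x hx
    simp [G, hx]
  refine ⟨G, hint.congr hG.symm, fun x => ?_, fun w z => ?_, ?_⟩
  · by_cases hx : Summable fun m => H m x
    · simpa [G, hx] using tsum_nonneg fun m => hkH.nonneg m x
    · simp only [G, hx, if_false]
      exact mul_nonneg (by unfold wienerBoundFactor; positivity)
        (tsum_nonneg fun m => integral_nonneg (hkH.nonneg m))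
  · by_cases hx : Summable fun m => H m (w - z)
    · simp only [G, hx, if_true]
      exact tsum_of_norm_bounded (hx.hasSum.mul_left _) (hkH.majorant · w z)
    · simp only [G, hx, if_false, ← mul_assoc]
      exact tsum_of_norm_bounded (hkH.summable_integral.hasSum.mul_left _) (hkH.norm_le ht hk · w z)
  · rw [integral_congr_ae hG, ← integral_tsum_of_summable_integral_norm hkH.integrable]
    simpa only [Real.norm_of_nonneg (hkH.nonneg _ _)] using hkH.summable_integral

end IsSummableMajorantFamily

end WienerFamily

section WienerNorm

variable {n : ℕ} {t : ℝ}

def wienerMajorantIntegrals (t : ℝ) (k : Cn n → Cn n → ℂ) : Set ℝ :=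
  {c | ∃ H : Cn n → ℝ, Integrable H ∧ (∀ x, 0 ≤ H x) ∧ IsWienerMajorant t k H ∧ c = ∫ x, H x}

lemma wienerNorm_eq (k : Cn n → Cn n → ℂ) :
    wienerNorm n t k = ((π * t) ^ n)⁻¹ * sInf (wienerMajorantIntegrals t k) := rfl

lemma exists_isWienerMajorant_integral_lt (ht : 0 < t) {k : Cn n → Cn n → ℂ}
    (hk : IsWienerKernel n t k) {ε : ℝ} (hε : 0 < ε) :
    ∃ H : Cn n → ℝ, Integrable H ∧ (∀ x, 0 ≤ H x) ∧ IsWienerMajorant t k H ∧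
      ∫ x, H x < (π * t) ^ n * wienerNorm n t k + ε := by
  obtain ⟨H, hH, hH0, hkH⟩ := hk.2.2.2
  have hne : (wienerMajorantIntegrals t k).Nonempty := ⟨_, H, hH, hH0, hkH, rfl⟩
  obtain ⟨_, ⟨H', hH', hH'0, hkH', rfl⟩, hlt⟩ := Real.lt_sInf_add_pos hne hε
  refine ⟨H', hH', hH'0, hkH', ?_⟩
  rwa [wienerNorm_eq, mul_inv_cancel_left₀ (by positivity)]

lemma wienerNorm_le_of_forall_pos (ht : 0 < t) {k : Cn n → Cn n → ℂ} {c : ℝ}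
    (hc : ∀ ε > 0, ∃ H : Cn n → ℝ, Integrable H ∧ (∀ x, 0 ≤ H x) ∧ IsWienerMajorant t k H ∧
      ∫ x, H x ≤ (π * t) ^ n * c + ε) :
    wienerNorm n t k ≤ c := by
  have hbdd : BddBelow (wienerMajorantIntegrals t k) := by
    refine ⟨0, ?_⟩
    rintro _ ⟨H, -, hH0, -, rfl⟩
    exact integral_nonneg hH0
  have hπt : 0 < (π * t) ^ n := by positivity
  rw [wienerNorm_eq, inv_mul_le_iff₀ hπt]
  refine le_of_forall_pos_le_add fun ε hε => ?_
  obtain ⟨H, hH, hH0, hkH, hle⟩ := hc ε hε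
  exact (csInf_le hbdd ⟨H, hH, hH0, hkH, rfl⟩).trans hle

lemma exists_isSummableMajorantFamily (ht : 0 < t) {k : ℕ → Cn n → Cn n → ℂ}
    (hk : ∀ m, IsWienerKernel n t (k m)) (hsum : Summable fun m => wienerNorm n t (k m))
    {ε : ℝ} (hε : 0 < ε) :
    ∃ H : ℕ → Cn n → ℝ, IsSummableMajorantFamily t k H ∧
      ∑' m, ∫ x, H m x ≤ (π * t) ^ n * ∑' m, wienerNorm n t (k m) + ε := by
  choose H hH hH0 hkH hlt using fun m =>
    exists_isWienerMajorant_integral_lt ht (hk m) (div_pos (half_pos hε) (pow_pos two_pos m))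
  have hbound : Summable fun m => (π * t) ^ n * wienerNorm n t (k m) + ε / 2 / 2 ^ m :=
    (hsum.mul_left _).add (summable_geometric_two' ε)
  have hsumH : Summable fun m => ∫ x, H m x :=
    hbound.of_nonneg_of_le (fun m => integral_nonneg (hH0 m)) fun m => (hlt m).le
  refine ⟨H, ⟨hH, hH0, hkH, hsumH⟩, ?_⟩
  calc ∑' m, ∫ x, H m x ≤ ∑' m, ((π * t) ^ n * wienerNorm n t (k m) + ε / 2 / 2 ^ m) :=
        hsumH.tsum_le_tsum (fun m => (hlt m).le) hbound
    _ = (π * t) ^ n * ∑' m, wienerNorm n t (k m) + ε := by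
        rw [(hsum.mul_left _).tsum_add (summable_geometric_two' ε), tsum_mul_left,
          tsum_geometric_two']

end WienerNorm

/-- For every `t > 0`, the normed space `(𝒲_t, ‖·‖_{𝒲_t})` is complete:
every sequence `(k_m)` in `𝒲_t` with `Σ_m ‖k_m‖_{𝒲_t} < ∞` has the property that
`Σ_m k_m` converges pointwise to an element `k ∈ 𝒲_t` with
`‖k‖_{𝒲_t} ≤ Σ_m ‖k_m‖_{𝒲_t}`. -/
theorem wiener_complete (n : ℕ) (t : ℝ) (ht : 0 < t) (k : ℕ → Cn n → Cn n → ℂ)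
    (hk : ∀ m, IsWienerKernel n t (k m))
    (hsum : Summable fun m => wienerNorm n t (k m)) :
    ∃ K : Cn n → Cn n → ℂ, IsWienerKernel n t K ∧
      (∀ w z : Cn n, HasSum (fun m => k m w z) (K w z)) ∧
      wienerNorm n t K ≤ ∑' m, wienerNorm n t (k m) := by
  have hhol (m : ℕ) (w : Cn n) : Differentiable ℂ (k m w) := (hk m).2.1 w
  obtain ⟨H, hH, -⟩ := exists_isSummableMajorantFamily ht hk hsum one_pos
  obtain ⟨G, hG, hG0, hGK, -⟩ := hH.exists_isWienerMajorant_tsum ht hhol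
  refine ⟨fun w z => ∑' m, k m w z,
    ⟨Measurable.tsum fun m => (hk m).1, hH.differentiable_tsum ht hhol,
      hH.differentiable_conj_tsum ht hhol fun m => (hk m).2.2.1, G, hG, hG0, hGK⟩,
    fun w z => (hH.summable ht hhol w z).hasSum, ?_⟩
  refine wienerNorm_le_of_forall_pos ht fun ε hε => ?_
  obtain ⟨H, hH, hle⟩ := exists_isSummableMajorantFamily ht hk hsum hε
  obtain ⟨G, hG, hG0, hGK, hGH⟩ := hH.exists_isWienerMajorant_tsum ht hhol
  exact ⟨G, hG, hG0, hGK, hGH ▸ hle⟩
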